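/- Σ_{k≥0} (k + 1 - 3⌊k/6⌋)(⌊k/6⌋ + 1) / ((k+1)(k+2)(k+6)(k+7)) = 7π/(360√3). -/

import Mathlib

/-!
Grouping the terms in blocks `k = 6m + r`, `0 ≤ r < 6`, makes `⌊k/6⌋ = m`, so each block sum is a
rational function of `m`. Its partial fraction decomposition is
`(1/30)(1/(6m+1) - 1/(6m+5)) + (1/60)(1/(6m+2) - 1/(6m+4)) + (T(m) - T(m+1))` with `T(0) = 0`.
The telescoping part sums to `T(0) = 0`; the other two are instances of
`∑ₙ (1/(qn+r) - 1/(qn+q-r)) = (π/q) cot(πr/q)`, a rearrangement of the Mittag-Leffler expansion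
of the cotangent, and `cot(π/6) = √3`, `cot(π/3) = 1/√3` give the value.
-/

open Real Filter Topology

lemma hasSum_of_eq_add_sub_succ {f g T : ℕ → ℝ} {s : ℝ} (hf : 0 ≤ f) (hg : HasSum g s)
    (hT : Tendsto T atTop (𝓝 0)) (hfg : ∀ n, f n = g n + (T n - T (n + 1))) :
    HasSum f (s + T 0) := by
  rw [hasSum_iff_tendsto_nat_of_nonneg hf]
  have hpartial : ∀ n, ∑ i ∈ Finset.range n, f i = ∑ i ∈ Finset.range n, g i + (T 0 - T n) := by
    intro n
    simp only [hfg, Finset.sum_add_distrib, Finset.sum_range_sub']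
  simp only [hpartial]
  simpa using hg.tendsto_sum_nat.add (hT.const_sub (T 0))

lemma hasSum_sub_succ_of_antitone {u : ℕ → ℝ} (hu : Antitone u) (hlim : Tendsto u atTop (𝓝 0)) :
    HasSum (fun n => u n - u (n + 1)) (u 0) := by
  simpa using hasSum_of_eq_add_sub_succ (g := 0) (fun n => sub_nonneg.2 (hu n.le_succ))
    hasSum_zero hlim (fun n => by simp)

lemma hasSum_one_div_sub_one_div_add_one {a : ℝ} (ha : 0 < a) :
    HasSum (fun n : ℕ => 1 / (n + a) - 1 / (n + 1 + a)) (1 / a) := by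
  have hanti : Antitone fun n : ℕ => 1 / (n + a) := fun m n hmn =>
    one_div_le_one_div_of_le (by positivity) (by gcongr)
  have hlim : Tendsto (fun n : ℕ => 1 / (n + a)) atTop (𝓝 0) :=
    tendsto_const_nhds.div_atTop (tendsto_atTop_add_const_right _ a tendsto_natCast_atTop_atTop)
  simpa [add_right_comm] using hasSum_sub_succ_of_antitone hanti hlim

lemma hasSum_cot_series {x : ℝ} (hx : x ∉ Set.range ((↑) : ℤ → ℝ)) :
    HasSum (fun n : ℕ => 1 / (x - (n + 1)) + 1 / (x + (n + 1))) (π * cot (π * x) - 1 / x) := by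
  have hxC : (x : ℂ) ∈ Complex.integerComplement := by
    rintro ⟨n, hn⟩
    exact hx ⟨n, by exact_mod_cast hn⟩
  rw [← Complex.hasSum_ofReal]
  push_cast
  rw [cot_series_rep' hxC]
  exact (summable_cotTerm hxC).hasSum

lemma hasSum_one_div_add_sub_one_div_one_sub {a : ℝ} (h0 : 0 < a) (h1 : a < 1) :
    HasSum (fun n : ℕ => 1 / (n + a) - 1 / (n + 1 - a)) (π * cot (π * a)) := by
  have hnotint : a ∉ Set.range ((↑) : ℤ → ℝ) := by
    rintro ⟨n, rfl⟩
    have : (0 : ℤ) < n := by exact_mod_cast h0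
    have : n < (1 : ℤ) := by exact_mod_cast h1
    omega
  convert (hasSum_cot_series hnotint).add (hasSum_one_div_sub_one_div_add_one h0) using 1
  · ext n
    rw [show a - (n + 1) = -(n + 1 - a) by ring, div_neg]
    ring
  · ring

lemma hasSum_one_div_mul_add_sub_one_div {q r : ℝ} (hr : 0 < r) (hrq : r < q) :
    HasSum (fun n : ℕ => 1 / (q * n + r) - 1 / (q * n + q - r)) (π / q * cot (π * r / q)) := by
  have hq : 0 < q := hr.trans hrq
  have hval : π / q * cot (π * r / q) = 1 / q * (π * cot (π * (r / q))) := by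
    rw [mul_div_assoc]
    ring
  rw [hval]
  refine ((hasSum_one_div_add_sub_one_div_one_sub (div_pos hr hq)
    ((div_lt_one hq).2 hrq)).mul_left (1 / q)).congr_fun fun n => ?_
  field_simp

lemma cot_pi_div_six : cot (π / 6) = √3 := by
  rw [cot_eq_cos_div_sin, cos_pi_div_six, sin_pi_div_six]
  ring

lemma cot_pi_div_three : cot (π / 3) = 1 / √3 := by
  rw [cot_eq_cos_div_sin, cos_pi_div_three, sin_pi_div_three]
  field_simp

lemma hasSum_of_hasSum_sum_fin {f : ℕ → ℝ} {s : ℝ} (p : ℕ) [NeZero p] (hf : 0 ≤ f)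
    (h : HasSum (fun m => ∑ r : Fin p, f (m * p + r)) s) : HasSum f s := by
  set e := (Nat.divModEquiv p).symm
  have hsum : Summable (f ∘ e) := (summable_prod_of_nonneg fun _ => hf _).2
    ⟨fun _ => Summable.of_finite, by simp only [tsum_fintype]; exact h.summable⟩
  have hfib := hsum.hasSum.prod_fiberwise fun m => hasSum_fintype fun r => (f ∘ e) (m, r)
  rw [← e.hasSum_iff, h.unique hfib]
  exact hsum.hasSum

noncomputable def seriesTerm (k : ℕ) : ℝ :=
  (((k : ℝ) + 1 - 3 * ((k / 6 : ℕ) : ℝ)) * (((k / 6 : ℕ) : ℝ) + 1)) /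
    (((k : ℝ) + 1) * ((k : ℝ) + 2) * ((k : ℝ) + 6) * ((k : ℝ) + 7))

lemma seriesTerm_nonneg (k : ℕ) : 0 ≤ seriesTerm k := by
  have h : 3 * ((k / 6 : ℕ) : ℝ) ≤ k := by exact_mod_cast (by omega : 3 * (k / 6) ≤ k)
  unfold seriesTerm
  exact div_nonneg (mul_nonneg (by linarith) (by positivity)) (by positivity)

lemma seriesTerm_mul_add {m r : ℕ} (hr : r < 6) :
    seriesTerm (m * 6 + r) = (3 * m + r + 1) * (m + 1) /
      ((6 * m + r + 1) * (6 * m + r + 2) * (6 * m + r + 6) * (6 * m + r + 7)) := by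
  rw [seriesTerm, show (m * 6 + r) / 6 = m by omega]
  push_cast
  ring

noncomputable def telescopingTerm (x : ℝ) : ℝ :=
  -7 / 360 / (6 * x + 1) + 1 / 180 / (6 * x + 2) + 1 / 80 / (6 * x + 3) + 1 / 45 / (6 * x + 4)
    + 5 / 144 / (6 * x + 5)

lemma telescopingTerm_zero : telescopingTerm 0 = 0 := by
  norm_num [telescopingTerm]

lemma tendsto_telescopingTerm : Tendsto (fun n : ℕ => telescopingTerm n) atTop (𝓝 0) := by
  have h : ∀ c d : ℝ, Tendsto (fun n : ℕ => d / (6 * n + c)) atTop (𝓝 0) := fun c d =>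
    tendsto_const_nhds.div_atTop (tendsto_atTop_add_const_right _ c
      (tendsto_natCast_atTop_atTop.const_mul_atTop (by norm_num)))
  simpa [telescopingTerm] using ((((h 1 _).add (h 2 _)).add (h 3 _)).add (h 4 _)).add (h 5 _)

lemma sum_range_six_eq_add_telescoping {x : ℝ} (hx : 0 ≤ x) :
    ∑ r ∈ Finset.range 6, (3 * x + r + 1) * (x + 1) /
        ((6 * x + r + 1) * (6 * x + r + 2) * (6 * x + r + 6) * (6 * x + r + 7)) =
      1 / 30 * (1 / (6 * x + 1) - 1 / (6 * x + 5)) + 1 / 60 * (1 / (6 * x + 2) - 1 / (6 * x + 4))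
        + (telescopingTerm x - telescopingTerm (x + 1)) := by
  simp only [Finset.sum_range_succ, Finset.sum_range_zero, telescopingTerm]
  push_cast
  field_simp
  ring

lemma sum_seriesTerm_block (m : ℕ) :
    ∑ r : Fin 6, seriesTerm (m * 6 + r) =
      1 / 30 * (1 / (6 * m + 1) - 1 / (6 * m + 5)) + 1 / 60 * (1 / (6 * m + 2) - 1 / (6 * m + 4))
        + (telescopingTerm m - telescopingTerm (m + 1)) := by
  rw [Fin.sum_univ_eq_sum_range (fun r => seriesTerm (m * 6 + r)),
    Finset.sum_congr rfl fun r hr => seriesTerm_mul_add (Finset.mem_range.1 hr)]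
  exact sum_range_six_eq_add_telescoping m.cast_nonneg

theorem series_p6 :
    (∑' k : ℕ,
        (((k : ℝ) + 1 - 3 * ((k / 6 : ℕ) : ℝ)) * (((k / 6 : ℕ) : ℝ) + 1)) /
          (((k : ℝ) + 1) * ((k : ℝ) + 2) * ((k : ℝ) + 6) * ((k : ℝ) + 7)))
      = 7 * π / (360 * Real.sqrt 3) := by
  have hsixth := hasSum_one_div_mul_add_sub_one_div (q := 6) (r := 1) (by norm_num) (by norm_num)
  have hthird := hasSum_one_div_mul_add_sub_one_div (q := 6) (r := 2) (by norm_num) (by norm_num)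
  rw [show π * 1 / 6 = π / 6 by ring, cot_pi_div_six] at hsixth
  rw [show π * 2 / 6 = π / 3 by ring, cot_pi_div_three] at hthird
  have hblocks := hasSum_of_eq_add_sub_succ
    (fun m => Finset.sum_nonneg fun r _ => seriesTerm_nonneg _)
    ((hsixth.mul_left (1 / 30)).add (hthird.mul_left (1 / 60))) tendsto_telescopingTerm
    fun m => by rw [sum_seriesTerm_block]; push_cast; ring
  have hval : 1 / 30 * (π / 6 * √3) + 1 / 60 * (π / 6 * (1 / √3)) + 0 = 7 * π / (360 * √3) := by
    field_simp
    rw [sq_sqrt (by norm_num)]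
    ring
  rw [Nat.cast_zero, telescopingTerm_zero, hval] at hblocks
  exact (hasSum_of_hasSum_sum_fin 6 seriesTerm_nonneg hblocks).tsum_eq
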